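/- Let E be a real normed vector space, let G be a finite group, and let ρ : G →* (E ≃L[ℝ] E) be a linear action of G on E. Let θ : E → (E →L[ℝ] ℝ) be a C¹ map (a 1-form), and define its exterior derivative pointwise by (dθ)(x)(u,v) := (fderiv ℝ θ x u)(v) − (fderiv ℝ θ x v)(u). Assume that dθ is G-invariant in the sense that for all g ∈ G, x ∈ E and u, v ∈ E one has (dθ)(ρ(g)x)(ρ(g)u, ρ(g)v) = (dθ)(x)(u,v). Define the averaged 1-form θ̄(x)(v) := (1/|G|) · Σ_{g∈G} θ(ρ(g)x)(ρ(g)v). Then θ̄ is G-invariant, i.e. θ̄(ρ(h)x)(ρ(h)v) = θ̄(x)(v) for all h ∈ G, x, v, and dθ̄ = dθ, i.e. (dθ̄)(x)(u,v) = (dθ)(x)(u,v) for all x, u, v. -/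

import Mathlib

/-- The average of the pullbacks of the 1-form `θ` under the linear `G`-action `ρ`:
`θ̄(x)(v) = (1/|G|) Σ_{g∈G} θ(ρ(g)x)(ρ(g)v)`. -/
noncomputable def avgForm {E : Type*} [NormedAddCommGroup E] [NormedSpace ℝ E]
    {G : Type*} [Group G] [Fintype G]
    (ρ : G →* (E ≃L[ℝ] E)) (θ : E → (E →L[ℝ] ℝ)) : E → (E →L[ℝ] ℝ) :=
  fun x => (Fintype.card G : ℝ)⁻¹ • ∑ g : G, (θ (ρ g x)).comp (ρ g : E →L[ℝ] E)

lemma avgForm_hasFDerivAt {E : Type*} [NormedAddCommGroup E] [NormedSpace ℝ E]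
    {G : Type*} [Group G] [Fintype G]
    (ρ : G →* (E ≃L[ℝ] E)) (θ : E → (E →L[ℝ] ℝ)) (hθ : ContDiff ℝ 1 θ) (x : E) :
    HasFDerivAt (avgForm ρ θ)
      ((Fintype.card G : ℝ)⁻¹ • ∑ g : G,
        (((ContinuousLinearMap.compL ℝ E E ℝ).flip (ρ g : E →L[ℝ] E)).comp
          ((fderiv ℝ θ (ρ g x)).comp (ρ g : E →L[ℝ] E)))) x := by
  refine HasFDerivAt.const_smul (f := fun y => ∑ g : G, (θ (ρ g y)).comp (ρ g : E →L[ℝ] E)) ?_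
    (Fintype.card G : ℝ)⁻¹
  apply HasFDerivAt.fun_sum
  intro g _
  have h1 : HasFDerivAt θ (fderiv ℝ θ (ρ g x)) (ρ g x) :=
    (hθ.differentiable one_ne_zero).differentiableAt.hasFDerivAt
  have h2 : HasFDerivAt (fun y => (ρ g : E →L[ℝ] E) y) (ρ g : E →L[ℝ] E) x :=
    (ρ g : E →L[ℝ] E).hasFDerivAt
  have h3 : HasFDerivAt (fun y => θ ((ρ g : E →L[ℝ] E) y))
      ((fderiv ℝ θ (ρ g x)).comp (ρ g : E →L[ℝ] E)) x := h1.comp x h2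
  exact (((ContinuousLinearMap.compL ℝ E E ℝ).flip
    (ρ g : E →L[ℝ] E)).hasFDerivAt).comp x h3

lemma avgForm_fderiv_apply {E : Type*} [NormedAddCommGroup E] [NormedSpace ℝ E]
    {G : Type*} [Group G] [Fintype G]
    (ρ : G →* (E ≃L[ℝ] E)) (θ : E → (E →L[ℝ] ℝ)) (hθ : ContDiff ℝ 1 θ) (x u v : E) :
    (fderiv ℝ (avgForm ρ θ) x u) v
      = (Fintype.card G : ℝ)⁻¹ * ∑ g : G, (fderiv ℝ θ (ρ g x) (ρ g u)) (ρ g v) := by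
  rw [(avgForm_hasFDerivAt ρ θ hθ x).fderiv]
  simp [ContinuousLinearMap.smul_apply, ContinuousLinearMap.sum_apply, Finset.mul_sum]

/-- Averaging a symplectic potential over a finite linear group action: if the
exterior derivative `dθ(x)(u,v) = (fderiv θ x u) v - (fderiv θ x v) u` is `G`-invariant,
then the averaged 1-form `θ̄` is `G`-invariant and `dθ̄ = dθ`. -/
theorem averaged_invariant_potential
    {E : Type*} [NormedAddCommGroup E] [NormedSpace ℝ E]
    {G : Type*} [Group G] [Fintype G]
    (ρ : G →* (E ≃L[ℝ] E)) (θ : E → (E →L[ℝ] ℝ)) (hθ : ContDiff ℝ 1 θ)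
    (hinv : ∀ (g : G) (x u v : E),
      (fderiv ℝ θ (ρ g x) (ρ g u)) (ρ g v) - (fderiv ℝ θ (ρ g x) (ρ g v)) (ρ g u)
        = (fderiv ℝ θ x u) v - (fderiv ℝ θ x v) u) :
    (∀ (h : G) (x v : E), avgForm ρ θ (ρ h x) (ρ h v) = avgForm ρ θ x v) ∧
    (∀ x u v : E,
      (fderiv ℝ (avgForm ρ θ) x u) v - (fderiv ℝ (avgForm ρ θ) x v) u
        = (fderiv ℝ θ x u) v - (fderiv ℝ θ x v) u) := by
  constructor
  · intro h x v
    unfold avgForm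
    simp only [ContinuousLinearMap.smul_apply, ContinuousLinearMap.sum_apply,
      ContinuousLinearMap.comp_apply, ContinuousLinearEquiv.coe_coe, smul_eq_mul]
    congr 1
    rw [← Equiv.sum_comp (Equiv.mulRight h) (fun g => θ (ρ g x) (ρ g v))]
    apply Finset.sum_congr rfl
    intro g _
    simp [Equiv.mulRight, map_mul]
    rfl
  · intro x u v
    have hcard : (Fintype.card G : ℝ) ≠ 0 := by
      exact_mod_cast Fintype.card_ne_zero
    rw [avgForm_fderiv_apply ρ θ hθ x u v, avgForm_fderiv_apply ρ θ hθ x v u,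
      ← mul_sub, ← Finset.sum_sub_distrib]
    have : ∀ g : G, (fderiv ℝ θ (ρ g x) (ρ g u)) (ρ g v)
        - (fderiv ℝ θ (ρ g x) (ρ g v)) (ρ g u)
        = (fderiv ℝ θ x u) v - (fderiv ℝ θ x v) u := fun g => hinv g x u v
    rw [Finset.sum_congr rfl (fun g _ => this g), Finset.sum_const, Finset.card_univ,
      nsmul_eq_mul, ← mul_assoc, inv_mul_cancel₀ hcard, one_mul]
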